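/- arXiv:1409.1352 — 3 statements merged into one kernel-verified Lean document; each statement's English description precedes it below -/
import Mathlib

section
/- Fix a, b > 0. Let η be a line of slope −b/a passing through a lattice point (x,y) with x,y ≥ 0, and let Λ be the maximal convex integral path for which η is a tangent line, with all edges labeled 'e' (that is, the convex generator with all edges labeled 'e' which, together with the coordinate axes, encloses exactly the lattice points (x',y') with x',y' ≥ 0 and bx' + ay' ≤ bx + ay). Then Λ is minimal for the ellipsoid E(a,b). -/
open Real Set

noncomputable section

/-! ### Symplectic embeddings of subsets of ℝ⁴ ≅ ℂ² -/

/-- ℝ⁴ with coordinates `(x₁, y₁, x₂, y₂)`, identified with ℂ² via `z_j = x_j + i y_j`. -/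
abbrev R4 : Type := ℝ × ℝ × ℝ × ℝ

/-- The standard symplectic form `ω = dx₁∧dy₁ + dx₂∧dy₂` on ℝ⁴, as a bilinear pairing. -/
def omegaStd (v w : R4) : ℝ :=
  v.1 * w.2.1 - v.2.1 * w.1 + v.2.2.1 * w.2.2.2 - v.2.2.2 * w.2.2.1

/-- `X` symplectically embeds into `X'`: there is an injective smooth map `φ` defined on an
open neighborhood `U` of `X` with `φ(X) ⊆ X'`, whose derivative at every point preserves
the standard symplectic form. -/
def SymplecticEmbeds (X X' : Set R4) : Prop :=
  ∃ (U : Set R4) (φ : R4 → R4),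
    IsOpen U ∧ X ⊆ U ∧ ContDiffOn ℝ (⊤ : ℕ∞) φ U ∧ Set.InjOn φ U ∧ φ '' X ⊆ X' ∧
    ∀ p ∈ U, ∀ v w : R4,
      omegaStd (fderiv ℝ φ p v) (fderiv ℝ φ p w) = omegaStd v w

/-- The polydisk `P(a,b) = {z : π|z₁|² ≤ a, π|z₂|² ≤ b}`. -/
def polydisk (a b : ℝ) : Set R4 :=
  {z | π * (z.1 ^ 2 + z.2.1 ^ 2) ≤ a ∧ π * (z.2.2.1 ^ 2 + z.2.2.2 ^ 2) ≤ b}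

/-- The ellipsoid `E(a,b) = {z : π|z₁|²/a + π|z₂|²/b ≤ 1}`. -/
def ellipsoid (a b : ℝ) : Set R4 :=
  {z | π * (z.1 ^ 2 + z.2.1 ^ 2) / a + π * (z.2.2.1 ^ 2 + z.2.2.2 ^ 2) / b ≤ 1}

/-- The ball `B(c) = E(c,c)`. -/
def ball4 (c : ℝ) : Set R4 := ellipsoid c c

/-! ### Convex generators -/

/-- A convex generator, encoded as a commutative formal product of symbols `e_{a,b}` and
`h_{a,b}` over coprime pairs `(a,b)` of nonnegative integers.  `mult (a,b)` is the total
exponent of the direction `(a,b)`, so the corresponding edge of the underlying convex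
integral path has displacement vector `(mult (a,b) • a, - mult (a,b) • b)`, and
`hLabel (a,b) = true` iff the factor `h_{a,b}` occurs, i.e. iff this edge is labeled `h`.
No factor `h_{a,b}` may be repeated, and `h_{1,0}`, `h_{0,1}` may not occur (horizontal
and vertical edges can only be labeled `e`). -/
structure ConvexGenerator where
  mult : ℕ × ℕ → ℕ
  hLabel : ℕ × ℕ → Bool
  coprime_of_mem : ∀ d, mult d ≠ 0 → Nat.Coprime d.1 d.2
  finite_support : {d : ℕ × ℕ | mult d ≠ 0}.Finite
  mult_pos_of_h : ∀ d, hLabel d = true → mult d ≠ 0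
  h_ne_horiz : hLabel (1, 0) = false
  h_ne_vert : hLabel (0, 1) = false

namespace ConvexGenerator

/-- `x(Λ)`, the horizontal coordinate of the right endpoint of the path. -/
def xCoord (Λ : ConvexGenerator) : ℕ := ∑ᶠ d : ℕ × ℕ, Λ.mult d * d.1

/-- `y(Λ)`, the vertical coordinate of the left endpoint of the path. -/
def yCoord (Λ : ConvexGenerator) : ℕ := ∑ᶠ d : ℕ × ℕ, Λ.mult d * d.2

/-- `m(Λ)`, the number of lattice points on the path minus one (the total multiplicity). -/
def mTotal (Λ : ConvexGenerator) : ℕ := ∑ᶠ d : ℕ × ℕ, Λ.mult d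

/-- `h(Λ)`, the number of edges labeled `h`. -/
def hCount (Λ : ConvexGenerator) : ℕ := {d : ℕ × ℕ | Λ.hLabel d = true}.ncard

/-- The maximum of the linear functional `(p,q) ↦ b' p + a' q` over the path `Λ`:
the path starts at `(0, y(Λ))` and the maximum of the functional over the concave path
is obtained by adding all positive increments `m (b' a - a' b)` of its edges
(truncated subtraction implements the positive part). -/
def suppFn (Λ : ConvexGenerator) (a' b' : ℕ) : ℕ :=
  a' * Λ.yCoord + ∑ᶠ d : ℕ × ℕ, Λ.mult d * (b' * d.1 - a' * d.2)

/-- The set of lattice points in the closed region enclosed by the path `Λ` and the two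
coordinate axes (including lattice points on the boundary). -/
def latticeRegion (Λ : ConvexGenerator) : Set (ℕ × ℕ) :=
  {p | ∀ a' b' : ℕ, b' * p.1 + a' * p.2 ≤ Λ.suppFn a' b'}

/-- `L(Λ)`, the number of lattice points enclosed by `Λ` and the axes (boundary included). -/
def LCount (Λ : ConvexGenerator) : ℕ := Λ.latticeRegion.ncard

/-- The ECH index `I(Λ) = 2(L(Λ) - 1) - h(Λ)`. -/
def iIndex (Λ : ConvexGenerator) : ℤ := 2 * ((Λ.LCount : ℤ) - 1) - (Λ.hCount : ℤ)

/-- All edges of `Λ` are labeled `e`. -/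
def allE (Λ : ConvexGenerator) : Prop := ∀ d : ℕ × ℕ, Λ.hLabel d = false

/-- The exponent of the factor `e_{a,b}` in the formal product `Λ`. -/
def eExp (Λ : ConvexGenerator) (d : ℕ × ℕ) : ℕ :=
  Λ.mult d - (if Λ.hLabel d = true then 1 else 0)

/-- The symplectic action `A_Ω(Λ) = Σ_ν max_{p ∈ Ω} (ν⃗ × p)`: the edge in direction
`(a,b)` with multiplicity `m` has `ν⃗ = (m a, -m b)`, and `ν⃗ × p = m (b p₁ + a p₂)`. -/
def action (Λ : ConvexGenerator) (Ω : Set (ℝ × ℝ)) : ℝ :=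
  ∑ᶠ d : ℕ × ℕ, (Λ.mult d : ℝ) *
    sSup ((fun p : ℝ × ℝ => (d.2 : ℝ) * p.1 + (d.1 : ℝ) * p.2) '' Ω)

end ConvexGenerator

/-- `Λ₁` and `Λ₂` have no elliptic orbit in common: no factor `e_{a,b}` appears in both. -/
def NoCommonElliptic (Λ₁ Λ₂ : ConvexGenerator) : Prop :=
  ∀ d : ℕ × ℕ, Λ₁.eExp d = 0 ∨ Λ₂.eExp d = 0

/-- `Λ₁` and `Λ₂` have no hyperbolic orbit in common: no factor `h_{a,b}` appears in both. -/
def NoCommonHyperbolic (Λ₁ Λ₂ : ConvexGenerator) : Prop :=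
  ∀ d : ℕ × ℕ, ¬(Λ₁.hLabel d = true ∧ Λ₂.hLabel d = true)

/-- The generator `e_{a,b}^m`: a single edge in the coprime direction `(a,b)` with
multiplicity `m`, labeled `e`. -/
def eGen (a b : ℕ) (hab : Nat.Coprime a b) (m : ℕ) : ConvexGenerator where
  mult d := if d = (a, b) then m else 0
  hLabel _ := false
  coprime_of_mem := by
    intro d hd
    have hd' : d = (a, b) := by
      by_contra h
      simp [h] at hd
    subst hd'
    exact hab
  finite_support := by
    apply Set.Finite.subset (Set.finite_singleton (a, b))
    intro d hd
    simp only [Set.mem_setOf_eq] at hd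
    by_contra h
    simp only [Set.mem_singleton_iff] at h
    simp [h] at hd
  mult_pos_of_h := by intro d h; simp at h
  h_ne_horiz := rfl
  h_ne_vert := rfl

/-- `e_{1,0}^m`: a horizontal edge of multiplicity `m` labeled `e`. -/
def e10 (m : ℕ) : ConvexGenerator := eGen 1 0 (Nat.coprime_one_left 0) m

/-- `e_{0,1}^m`: a vertical edge of multiplicity `m` labeled `e`. -/
def e01 (m : ℕ) : ConvexGenerator := eGen 0 1 (Nat.coprime_one_right 0) m

/-- `e_{1,1}^m`: a single edge from `(0,m)` to `(m,0)` labeled `e`. -/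
def e11 (m : ℕ) : ConvexGenerator := eGen 1 1 (Nat.coprime_one_left 1) m

/-- `e_{b,1}^m`: a single edge with displacement vector `(m b, -m)` labeled `e`. -/
def eb1 (b m : ℕ) : ConvexGenerator := eGen b 1 (Nat.coprime_one_right b) m

/-- The product of two convex generators (concatenation of formal products; faithful to
the paper's product whenever the factors have no hyperbolic orbit in common). -/
def mulCG (Λ₁ Λ₂ : ConvexGenerator) : ConvexGenerator where
  mult d := Λ₁.mult d + Λ₂.mult d
  hLabel d := Λ₁.hLabel d || Λ₂.hLabel d
  coprime_of_mem := by
    intro d hd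
    have hd' : Λ₁.mult d + Λ₂.mult d ≠ 0 := hd
    rcases Nat.eq_zero_or_pos (Λ₁.mult d) with h1 | h1
    · exact Λ₂.coprime_of_mem d (by omega)
    · exact Λ₁.coprime_of_mem d (by omega)
  finite_support := by
    apply Set.Finite.subset (Λ₁.finite_support.union Λ₂.finite_support)
    intro d hd
    simp only [Set.mem_setOf_eq] at hd
    simp only [Set.mem_union, Set.mem_setOf_eq]
    omega
  mult_pos_of_h := by
    intro d h
    show Λ₁.mult d + Λ₂.mult d ≠ 0
    rcases Bool.or_eq_true_iff.mp h with h' | h'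
    · have := Λ₁.mult_pos_of_h d h'; omega
    · have := Λ₂.mult_pos_of_h d h'; omega
  h_ne_horiz := by rw [Bool.or_eq_false_iff]; exact ⟨Λ₁.h_ne_horiz, Λ₂.h_ne_horiz⟩
  h_ne_vert := by rw [Bool.or_eq_false_iff]; exact ⟨Λ₁.h_ne_vert, Λ₂.h_ne_vert⟩

/-- The product `∏_{i ∈ S} Λᵢ` of a family of convex generators (faithful to the paper's
product whenever the factors pairwise have no hyperbolic orbit in common). -/
def finProd {n : ℕ} (S : Finset (Fin n)) (Λs : Fin n → ConvexGenerator) : ConvexGenerator where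
  mult d := ∑ i ∈ S, (Λs i).mult d
  hLabel d := decide (∃ i ∈ S, (Λs i).hLabel d = true)
  coprime_of_mem := by
    intro d hd
    have : ∃ i ∈ S, (Λs i).mult d ≠ 0 := by
      by_contra hcon
      push_neg at hcon
      exact hd (Finset.sum_eq_zero hcon)
    obtain ⟨i, _, hi⟩ := this
    exact (Λs i).coprime_of_mem d hi
  finite_support := by
    apply Set.Finite.subset
      (Set.Finite.biUnion S.finite_toSet fun i _ => (Λs i).finite_support)
    intro d hd
    simp only [Set.mem_setOf_eq] at hd
    have : ∃ i ∈ S, (Λs i).mult d ≠ 0 := by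
      by_contra hcon
      push_neg at hcon
      exact hd (Finset.sum_eq_zero hcon)
    obtain ⟨i, hiS, hi⟩ := this
    exact Set.mem_biUnion hiS hi
  mult_pos_of_h := by
    intro d h
    obtain ⟨i, hiS, hi⟩ := of_decide_eq_true h
    intro hsum
    rw [Finset.sum_eq_zero_iff] at hsum
    exact (Λs i).mult_pos_of_h d hi (hsum i hiS)
  h_ne_horiz := by
    rw [decide_eq_false_iff_not]
    rintro ⟨i, -, hi⟩
    rw [(Λs i).h_ne_horiz] at hi
    exact Bool.false_ne_true hi
  h_ne_vert := by
    rw [decide_eq_false_iff_not]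
    rintro ⟨i, -, hi⟩
    rw [(Λs i).h_ne_vert] at hi
    exact Bool.false_ne_true hi

/-! ### Convex toric domains -/

/-- The moment-map region `Ω` of a convex toric domain:
`Ω = {(x,y) : 0 ≤ x ≤ A, 0 ≤ y ≤ f(x)}` with `f : [0,A] → ℝ≥0` nonincreasing concave. -/
structure ConvexToricDomain where
  A : ℝ
  A_pos : 0 < A
  f : ℝ → ℝ
  f_nonneg : ∀ x ∈ Set.Icc (0 : ℝ) A, 0 ≤ f x
  f_anti : AntitoneOn f (Set.Icc (0 : ℝ) A)
  f_concave : ConcaveOn ℝ (Set.Icc (0 : ℝ) A) f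

namespace ConvexToricDomain

/-- The region `Ω ⊆ ℝ²`. -/
def Omega (D : ConvexToricDomain) : Set (ℝ × ℝ) :=
  {p | 0 ≤ p.1 ∧ p.1 ≤ D.A ∧ 0 ≤ p.2 ∧ p.2 ≤ D.f p.1}

/-- The toric domain `X_Ω = {z ∈ ℂ² : (π|z₁|², π|z₂|²) ∈ Ω}` as a subset of ℝ⁴. -/
def toDomain (D : ConvexToricDomain) : Set R4 :=
  {z | (π * (z.1 ^ 2 + z.2.1 ^ 2), π * (z.2.2.1 ^ 2 + z.2.2.2 ^ 2)) ∈ D.Omega}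

end ConvexToricDomain

/-- The moment region of the polydisk `P(a,b)`: the rectangle `[0,a] × [0,b]`. -/
def rectOmega (a b : ℝ) : Set (ℝ × ℝ) :=
  {p | 0 ≤ p.1 ∧ p.1 ≤ a ∧ 0 ≤ p.2 ∧ p.2 ≤ b}

/-- The moment region of the ellipsoid `E(a,b)`: the triangle with vertices
`(0,0)`, `(a,0)`, `(0,b)`. -/
def triOmega (a b : ℝ) : Set (ℝ × ℝ) :=
  {p | 0 ≤ p.1 ∧ 0 ≤ p.2 ∧ p.1 / a + p.2 / b ≤ 1}

/-- `Λ ≤_{Ω,Ω'} Λ'` (Definition 1.16 of the paper, for `Λ'` with all edges `e`):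
(i) equal ECH indices, (ii) `A_Ω(Λ) ≤ A_{Ω'}(Λ')`, and
(iii) `x(Λ) + y(Λ) - h(Λ)/2 ≥ x(Λ') + y(Λ') + m(Λ') - 1`. -/
def genLE (Ω Ω' : Set (ℝ × ℝ)) (Λ Λ' : ConvexGenerator) : Prop :=
  Λ.iIndex = Λ'.iIndex ∧
  Λ.action Ω ≤ Λ'.action Ω' ∧
  ((Λ'.xCoord : ℝ) + (Λ'.yCoord : ℝ) + (Λ'.mTotal : ℝ) - 1 ≤
    (Λ.xCoord : ℝ) + (Λ.yCoord : ℝ) - (Λ.hCount : ℝ) / 2)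

/-- `Λ` is minimal for the convex toric domain with moment region `Ω`: all edges of `Λ`
are labeled `e`, and `Λ` uniquely minimizes the action among convex generators with the
same ECH index and all edges labeled `e`. -/
def IsMinimal (Ω : Set (ℝ × ℝ)) (Λ : ConvexGenerator) : Prop :=
  Λ.allE ∧ ∀ Λ' : ConvexGenerator, Λ'.allE → Λ'.iIndex = Λ.iIndex → Λ' ≠ Λ →
    Λ.action Ω < Λ'.action Ω

end

open ConvexGenerator

namespace EllMin

lemma finsum_eq_sum' (Λ : ConvexGenerator) {M : Type*} [AddCommMonoid M] (f : ℕ × ℕ → M)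
    (hf : ∀ d, Λ.mult d = 0 → f d = 0) {s : Finset (ℕ × ℕ)}
    (hs : ∀ d, Λ.mult d ≠ 0 → d ∈ s) :
    ∑ᶠ d, f d = ∑ d ∈ s, f d := by
  apply finsum_eq_finset_sum_of_support_subset
  intro d hd
  simp only [Function.mem_support] at hd
  exact hs d fun h => hd (hf d h)

lemma suppFn_eq_sum (Λ : ConvexGenerator) (a' b' : ℕ) {s : Finset (ℕ × ℕ)}
    (hs : ∀ d, Λ.mult d ≠ 0 → d ∈ s) :
    Λ.suppFn a' b' = ∑ d ∈ s, Λ.mult d * max (a' * d.2) (b' * d.1) := by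
  unfold ConvexGenerator.suppFn ConvexGenerator.yCoord
  rw [finsum_eq_sum' Λ (fun d => Λ.mult d * d.2) (by intro d h; simp [h]) hs,
      finsum_eq_sum' Λ (fun d => Λ.mult d * (b' * d.1 - a' * d.2)) (by intro d h; simp [h]) hs,
      Finset.mul_sum, ← Finset.sum_add_distrib]
  refine Finset.sum_congr rfl fun d _ => ?_
  rcases le_total (a' * d.2) (b' * d.1) with h | h
  · rw [max_eq_right h, mul_left_comm, ← Nat.mul_add, Nat.add_sub_cancel' h]
  · rw [max_eq_left h, Nat.sub_eq_zero_of_le h, Nat.mul_zero, Nat.add_zero, mul_left_comm]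

lemma xCoord_eq_sum (Λ : ConvexGenerator) {s : Finset (ℕ × ℕ)}
    (hs : ∀ d, Λ.mult d ≠ 0 → d ∈ s) :
    Λ.xCoord = ∑ d ∈ s, Λ.mult d * d.1 :=
  finsum_eq_sum' Λ _ (by intro d h; simp [h]) hs

lemma yCoord_eq_sum (Λ : ConvexGenerator) {s : Finset (ℕ × ℕ)}
    (hs : ∀ d, Λ.mult d ≠ 0 → d ∈ s) :
    Λ.yCoord = ∑ d ∈ s, Λ.mult d * d.2 :=
  finsum_eq_sum' Λ _ (by intro d h; simp [h]) hs

lemma suppFn_zero_one (Λ : ConvexGenerator) : Λ.suppFn 0 1 = Λ.xCoord := by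
  unfold ConvexGenerator.suppFn ConvexGenerator.xCoord
  simp

lemma suppFn_one_zero (Λ : ConvexGenerator) : Λ.suppFn 1 0 = Λ.yCoord := by
  unfold ConvexGenerator.suppFn
  simp

lemma mem_region_iff (Λ : ConvexGenerator) (p : ℕ × ℕ) :
    p ∈ Λ.latticeRegion ↔ ∀ a' b' : ℕ, b' * p.1 + a' * p.2 ≤ Λ.suppFn a' b' := Iff.rfl

/-- The witness point associated to a predicate `P` lies in the lattice region. -/
lemma witness_mem (Λ : ConvexGenerator) {s : Finset (ℕ × ℕ)}
    (hs : ∀ d, Λ.mult d ≠ 0 → d ∈ s) (P : ℕ × ℕ → Prop) [DecidablePred P] :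
    ((∑ d ∈ s, if P d then Λ.mult d * d.1 else 0),
     (∑ d ∈ s, if P d then 0 else Λ.mult d * d.2)) ∈ Λ.latticeRegion := by
  intro a' b'
  rw [suppFn_eq_sum Λ a' b' hs]
  simp only [Finset.mul_sum]
  rw [← Finset.sum_add_distrib]
  refine Finset.sum_le_sum fun d _ => ?_
  by_cases h : P d
  · simp only [if_pos h, Nat.mul_zero, Nat.add_zero]
    calc b' * (Λ.mult d * d.1) = Λ.mult d * (b' * d.1) := by ring
    _ ≤ _ := Nat.mul_le_mul_left _ (le_max_right _ _)
  · simp only [if_neg h, Nat.mul_zero, Nat.zero_add]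
    calc a' * (Λ.mult d * d.2) = Λ.mult d * (a' * d.2) := by ring
    _ ≤ _ := Nat.mul_le_mul_left _ (le_max_left _ _)

/-- The value of the integer functional at the witness point for `P d = (a'·d₂ < b'·d₁)`
is exactly `suppFn a' b'`. -/
lemma suppFn_attained (Λ : ConvexGenerator) (a' b' : ℕ) {s : Finset (ℕ × ℕ)}
    (hs : ∀ d, Λ.mult d ≠ 0 → d ∈ s) :
    ∃ p ∈ Λ.latticeRegion, b' * p.1 + a' * p.2 = Λ.suppFn a' b' := by
  classical
  refine ⟨_, witness_mem Λ hs (fun d => a' * d.2 < b' * d.1), ?_⟩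
  rw [suppFn_eq_sum Λ a' b' hs]
  simp only [Finset.mul_sum]
  rw [← Finset.sum_add_distrib]
  refine Finset.sum_congr rfl fun d _ => ?_
  by_cases h : a' * d.2 < b' * d.1
  · simp only [if_pos h, Nat.mul_zero, Nat.add_zero, max_eq_right h.le]
    ring
  · push_neg at h
    simp only [if_neg (not_lt.mpr h), Nat.mul_zero, Nat.zero_add, max_eq_left h]
    ring

end EllMin

open ConvexGenerator

namespace EllMin

/-- Real support function. -/
noncomputable def rS (Λ : ConvexGenerator) (a b : ℝ) : ℝ :=
  ∑ᶠ d : ℕ × ℕ, (Λ.mult d : ℝ) * max (a * d.2) (b * d.1)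

lemma rS_eq_sum (Λ : ConvexGenerator) (a b : ℝ) {s : Finset (ℕ × ℕ)}
    (hs : ∀ d, Λ.mult d ≠ 0 → d ∈ s) :
    rS Λ a b = ∑ d ∈ s, (Λ.mult d : ℝ) * max (a * d.2) (b * d.1) :=
  finsum_eq_sum' Λ _ (by intro d h; simp [h]) hs

lemma sSup_tri (a b : ℝ) (ha : 0 < a) (hb : 0 < b) (d : ℕ × ℕ) :
    sSup ((fun p : ℝ × ℝ => (d.2 : ℝ) * p.1 + (d.1 : ℝ) * p.2) '' triOmega a b)
      = max (a * d.2) (b * d.1) := by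
  apply IsGreatest.csSup_eq
  constructor
  · rcases le_total (a * (d.2 : ℝ)) (b * d.1) with h | h
    · rw [max_eq_right h]
      exact ⟨(0, b), ⟨le_refl 0, hb.le, by rw [zero_div, div_self hb.ne', zero_add]⟩, by ring⟩
    · rw [max_eq_left h]
      exact ⟨(a, 0), ⟨ha.le, le_refl 0, by rw [zero_div, div_self ha.ne', add_zero]⟩, by ring⟩
  · rintro v ⟨p, ⟨hp1, hp2, hp3⟩, rfl⟩
    set M := max (a * (d.2 : ℝ)) (b * d.1) with hM
    have hM0 : 0 ≤ M := le_trans (by positivity) (le_max_left _ _)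
    have h1 : a * (d.2 : ℝ) ≤ M := le_max_left _ _
    have h2 : b * (d.1 : ℝ) ≤ M := le_max_right _ _
    have h3 : b * p.1 + a * p.2 ≤ a * b := by
      rw [div_add_div _ _ ha.ne' hb.ne', div_le_one (by positivity)] at hp3
      linarith [hp3]
    have e1 : (a * b) * ((d.2 : ℝ) * p.1 + (d.1 : ℝ) * p.2) ≤ (a * b) * M := by
      nlinarith [mul_le_mul_of_nonneg_right h1 hp1, mul_le_mul_of_nonneg_right h2 hp2,
        mul_le_mul_of_nonneg_left h3 hM0]
    have hab : (0 : ℝ) < a * b := by positivity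
    exact le_of_mul_le_mul_left e1 hab

lemma action_eq_rS (Λ : ConvexGenerator) (a b : ℝ) (ha : 0 < a) (hb : 0 < b) :
    Λ.action (triOmega a b) = rS Λ a b := by
  unfold ConvexGenerator.action rS
  exact finsum_congr fun d => by rw [sSup_tri a b ha hb d]

lemma rS_nat (Λ : ConvexGenerator) (a' b' : ℕ) :
    rS Λ (a' : ℝ) (b' : ℝ) = (Λ.suppFn a' b' : ℝ) := by
  classical
  set s := Λ.finite_support.toFinset
  have hs : ∀ d, Λ.mult d ≠ 0 → d ∈ s := fun d hd => Λ.finite_support.mem_toFinset.mpr hd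
  rw [rS_eq_sum Λ _ _ hs, suppFn_eq_sum Λ a' b' hs]
  push_cast
  rfl

lemma rS_homog (Λ : ConvexGenerator) (t a b : ℝ) (ht : 0 ≤ t) :
    rS Λ (t * a) (t * b) = t * rS Λ a b := by
  classical
  set s := Λ.finite_support.toFinset
  have hs : ∀ d, Λ.mult d ≠ 0 → d ∈ s := fun d hd => Λ.finite_support.mem_toFinset.mpr hd
  rw [rS_eq_sum Λ _ _ hs, rS_eq_sum Λ _ _ hs, Finset.mul_sum]
  refine Finset.sum_congr rfl fun d _ => ?_
  rw [mul_assoc, mul_assoc, ← mul_max_of_nonneg _ _ ht]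
  ring_nf

/-- `C Λ = Σ m_d (d₁ + d₂)`. -/
noncomputable def rC (Λ : ConvexGenerator) : ℝ :=
  ∑ d ∈ Λ.finite_support.toFinset, (Λ.mult d : ℝ) * ((d.1 : ℝ) + d.2)

lemma rC_nonneg (Λ : ConvexGenerator) : 0 ≤ rC Λ :=
  Finset.sum_nonneg fun d _ => by positivity

lemma rS_le_shift (Λ : ConvexGenerator) {a b u v : ℝ} (ha : 0 ≤ a) (hb : 0 ≤ b)
    (hau : a ≤ u) (hbv : b ≤ v) (hu : u ≤ a + 1) (hv : v ≤ b + 1) :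
    rS Λ u v ≤ rS Λ a b + rC Λ := by
  classical
  set s := Λ.finite_support.toFinset
  have hs : ∀ d, Λ.mult d ≠ 0 → d ∈ s := fun d hd => Λ.finite_support.mem_toFinset.mpr hd
  rw [rS_eq_sum Λ _ _ hs, rS_eq_sum Λ _ _ hs]
  unfold rC
  rw [← Finset.sum_add_distrib]
  refine Finset.sum_le_sum fun d _ => ?_
  rw [← mul_add]
  refine mul_le_mul_of_nonneg_left ?_ (Nat.cast_nonneg _)
  refine max_le ?_ ?_
  · calc u * (d.2 : ℝ) ≤ (a + 1) * d.2 := by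
          exact mul_le_mul_of_nonneg_right hu (Nat.cast_nonneg _)
    _ = a * d.2 + d.2 := by ring
    _ ≤ max (a * d.2) (b * d.1) + ((d.1 : ℝ) + d.2) := by
          have := le_max_left (a * (d.2:ℝ)) (b * d.1)
          have : (0:ℝ) ≤ d.1 := Nat.cast_nonneg _
          linarith [le_max_left (a * (d.2:ℝ)) (b * d.1), Nat.cast_nonneg (α := ℝ) d.1]
  · calc v * (d.1 : ℝ) ≤ (b + 1) * d.1 := by
          exact mul_le_mul_of_nonneg_right hv (Nat.cast_nonneg _)
    _ = b * d.1 + d.1 := by ring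
    _ ≤ max (a * d.2) (b * d.1) + ((d.1 : ℝ) + d.2) := by
          linarith [le_max_right (a * (d.2:ℝ)) (b * d.1), Nat.cast_nonneg (α := ℝ) d.2]

/-- Real-coefficient bound: any point of the lattice region satisfies
`b p₁ + a p₂ ≤ rS Λ a b` for all nonnegative reals `a`, `b`. -/
lemma region_bound (Λ : ConvexGenerator) {p : ℕ × ℕ} (hp : p ∈ Λ.latticeRegion)
    {a b : ℝ} (ha : 0 ≤ a) (hb : 0 ≤ b) :
    b * p.1 + a * p.2 ≤ rS Λ a b := by
  by_contra hcon
  push_neg at hcon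
  set X := b * (p.1 : ℝ) + a * p.2 with hX
  set Y := rS Λ a b with hY
  obtain ⟨n, hn⟩ := exists_nat_gt (rC Λ / (X - Y))
  have key : (n : ℝ) * X ≤ n * Y + rC Λ := by
    set a' := ⌈(n : ℝ) * a⌉₊ with ha'
    set b' := ⌈(n : ℝ) * b⌉₊ with hb'
    have h1 : (n : ℝ) * X ≤ (b' : ℝ) * p.1 + (a' : ℝ) * p.2 := by
      have l1 : (n : ℝ) * a ≤ a' := Nat.le_ceil _
      have l2 : (n : ℝ) * b ≤ b' := Nat.le_ceil _
      have := mul_le_mul_of_nonneg_right l1 (Nat.cast_nonneg (α := ℝ) p.2)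
      have := mul_le_mul_of_nonneg_right l2 (Nat.cast_nonneg (α := ℝ) p.1)
      rw [hX]; ring_nf; nlinarith [mul_le_mul_of_nonneg_right l1 (Nat.cast_nonneg (α := ℝ) p.2),
        mul_le_mul_of_nonneg_right l2 (Nat.cast_nonneg (α := ℝ) p.1)]
    have h2 : (b' : ℝ) * p.1 + (a' : ℝ) * p.2 ≤ rS Λ a' b' := by
      rw [rS_nat]
      exact_mod_cast hp a' b'
    have h3 : rS Λ a' b' ≤ rS Λ ((n : ℝ) * a) ((n : ℝ) * b) + rC Λ := by
      refine rS_le_shift Λ (by positivity) (by positivity) (Nat.le_ceil _) (Nat.le_ceil _)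
        (le_of_lt (Nat.ceil_lt_add_one (by positivity))) (le_of_lt (Nat.ceil_lt_add_one (by positivity)))
    have h4 : rS Λ ((n : ℝ) * a) ((n : ℝ) * b) = n * Y := rS_homog Λ n a b (Nat.cast_nonneg _)
    linarith
  have hdiff : 0 < X - Y := by linarith
  have : rC Λ < (n : ℝ) * (X - Y) := (div_lt_iff₀ hdiff).mp hn
  nlinarith

lemma region_finite (Λ : ConvexGenerator) : Λ.latticeRegion.Finite := by
  apply Set.Finite.subset (Set.finite_Icc ((0, 0) : ℕ × ℕ) (Λ.suppFn 0 1, Λ.suppFn 1 0))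
  intro p hp
  have h1 := hp 0 1
  have h2 := hp 1 0
  simp only [Nat.one_mul, Nat.zero_mul, Nat.add_zero, Nat.zero_add] at h1 h2
  exact Set.mem_Icc.mpr ⟨⟨Nat.zero_le _, Nat.zero_le _⟩, ⟨h1, h2⟩⟩

lemma hCount_eq_zero (Λ : ConvexGenerator) (h : Λ.allE) : Λ.hCount = 0 := by
  unfold ConvexGenerator.hCount
  convert Set.ncard_empty (ℕ × ℕ)
  ext d
  simp [h d]

end EllMin

open ConvexGenerator

namespace EllMin

lemma cross_ne {p q d1 d2 : ℕ} (hpq : Nat.Coprime p q) (hd : Nat.Coprime d1 d2)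
    (hne : (d1, d2) ≠ (p, q)) : p * d2 ≠ q * d1 := by
  intro h
  rcases Nat.eq_zero_or_pos q with hq | hq
  · subst hq
    have hp1 : p = 1 := Nat.coprime_zero_right p |>.mp hpq
    subst hp1
    simp at h
    subst h
    have : d1 = 1 := Nat.coprime_zero_right d1 |>.mp hd
    exact hne (by simp [this])
  · -- q ∣ p * d2 = q * d1, coprime q p ⇒ q ∣ d2
    have hqd : q ∣ d2 := (Nat.Coprime.dvd_of_dvd_mul_left hpq.symm ⟨d1, h⟩)
    obtain ⟨k, rfl⟩ := hqd
    have hd1 : d1 = p * k := by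
      have : q * (p * k) = q * d1 := by rw [← h]; ring
      exact (Nat.eq_of_mul_eq_mul_left hq this).symm
    subst hd1
    have hk : k = 1 := by
      have := hd
      unfold Nat.Coprime at this
      rw [show p * k = p * k from rfl, show q * k = q * k from rfl] at this
      have h2 : Nat.gcd (p * k) (q * k) = Nat.gcd p q * k := Nat.gcd_mul_right p k q
      rw [h2, hpq, one_mul] at this
      exact this
    subst hk
    exact hne (by simp)

private lemma tri_id (K m c : ℕ) (hK : 1 ≤ K) :
    m * ((K + 1) * c) + m * ((K - 1) * c) = 2 * (m * (K * c)) := by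
  obtain ⟨K', rfl⟩ := Nat.exists_eq_add_of_le hK
  have h1 : 1 + K' + 1 = K' + 2 := by omega
  have h2 : 1 + K' - 1 = K' := by omega
  rw [h1, h2]
  ring

lemma stepA (Λ : ConvexGenerator) {s : Finset (ℕ × ℕ)}
    (hs : ∀ d, Λ.mult d ≠ 0 → d ∈ s)
    (N p q : ℕ) (hp : 1 ≤ p) (hq : 1 ≤ q) (hpq : Nat.Coprime p q)
    (hN : ∀ d ∈ s, d.1 < N) (hN1 : 1 ≤ N) :
    Λ.suppFn (N * p) (N * q + 1) + Λ.suppFn (N * p) (N * q - 1)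
      = 2 * Λ.suppFn (N * p) (N * q) + p * Λ.mult (p, q) := by
  classical
  set s' := insert (p, q) s with hs'def
  have hs' : ∀ d, Λ.mult d ≠ 0 → d ∈ s' := fun d hd => Finset.mem_insert_of_mem (hs d hd)
  rw [suppFn_eq_sum Λ _ _ hs', suppFn_eq_sum Λ _ _ hs', suppFn_eq_sum Λ _ _ hs']
  have hmem : (p, q) ∈ s' := Finset.mem_insert_self _ _
  have hext : p * Λ.mult (p, q) =
      ∑ d ∈ s', if d = (p, q) then p * Λ.mult d else 0 := by
    rw [Finset.sum_ite_eq' s' (p, q) (fun d => p * Λ.mult d)]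
    simp [hmem]
  rw [Finset.mul_sum, hext, ← Finset.sum_add_distrib, ← Finset.sum_add_distrib]
  refine Finset.sum_congr rfl fun d hd => ?_
  by_cases hm : Λ.mult d = 0
  · simp [hm]
  by_cases hdpq : d = (p, q)
  · subst hdpq
    simp only [if_pos rfl]
    -- maxes: max (N*p*q) ((N*q+1)*p) = N*p*q + p ; max (N*p*q) ((N*q-1)*p) = N*p*q
    have e1 : max (N * p * ((p, q) : ℕ × ℕ).2) ((N * q + 1) * ((p, q) : ℕ × ℕ).1)
        = N * p * q + p := by
      simp only
      rw [show (N * q + 1) * p = N * p * q + p by ring]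
      exact max_eq_right (Nat.le_add_right _ _)
    have e2 : max (N * p * ((p, q) : ℕ × ℕ).2) ((N * q - 1) * ((p, q) : ℕ × ℕ).1)
        = N * p * q := by
      simp only
      refine max_eq_left ?_
      calc (N * q - 1) * p ≤ (N * q) * p := Nat.mul_le_mul_right _ (Nat.sub_le _ _)
      _ = N * p * q := by ring
    have e3 : max (N * p * ((p, q) : ℕ × ℕ).2) ((N * q) * ((p, q) : ℕ × ℕ).1)
        = N * p * q := by
      simp only
      exact max_eq_left (le_of_eq (by ring))
    rw [e1, e2, e3]
    simp only [if_pos trivial]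
    ring
  · simp only [if_neg hdpq]
    have hds : d ∈ s := by
      rcases Finset.mem_insert.mp hd with h | h
      · exact absurd h hdpq
      · exact h
    have hd1N : d.1 < N := hN d hds
    have hcop : Nat.Coprime d.1 d.2 := Λ.coprime_of_mem d hm
    have hcross : p * d.2 ≠ q * d.1 := cross_ne hpq hcop (by rwa [Prod.mk.eta])
    rcases Nat.lt_or_ge (q * d.1) (p * d.2) with hlt | hge
    · -- p d2 > q d1 : all maxes are N*p*d.2
      have key : (N * q + 1) * d.1 ≤ N * p * d.2 := by
        have h1 : N * (q * d.1 + 1) ≤ N * (p * d.2) := Nat.mul_le_mul_left N hlt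
        nlinarith [h1, hd1N.le]
      have key2 : (N * q) * d.1 ≤ N * p * d.2 := le_trans (Nat.mul_le_mul_right _ (Nat.le_add_right _ 1) |>.trans_eq rfl) key
      have key3 : (N * q - 1) * d.1 ≤ N * p * d.2 :=
        le_trans (Nat.mul_le_mul_right _ (by omega)) key
      rw [max_eq_left key, max_eq_left key2, max_eq_left key3]
      ring
    · -- p d2 < q d1 : all maxes are b' * d.1
      have hlt' : p * d.2 < q * d.1 := lt_of_le_of_ne hge hcross
      have key : N * p * d.2 ≤ (N * q - 1) * d.1 := by
        have h1 : N * (p * d.2 + 1) ≤ N * (q * d.1) := Nat.mul_le_mul_left N hlt'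
        have h2 : (N * q - 1) * d.1 = N * q * d.1 - d.1 := by
          rw [Nat.sub_mul, one_mul]
        rw [h2]
        have h3 : N * p * d.2 + N ≤ N * q * d.1 := by nlinarith [h1]
        omega
      have key2 : N * p * d.2 ≤ (N * q) * d.1 :=
        le_trans key (Nat.mul_le_mul_right _ (Nat.sub_le _ _))
      have key3 : N * p * d.2 ≤ (N * q + 1) * d.1 :=
        le_trans key2 (Nat.mul_le_mul_right _ (Nat.le_add_right _ _))
      rw [max_eq_right key, max_eq_right key2, max_eq_right key3]
      have hK : 1 ≤ N * q := Nat.one_le_iff_ne_zero.mpr (by positivity)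
      rw [Nat.add_zero]
      exact tri_id (N * q) (Λ.mult d) d.1 hK

end EllMin

open ConvexGenerator

namespace EllMin

lemma gen_ext (Λ Λ' : ConvexGenerator) (h1 : Λ.mult = Λ'.mult)
    (h2 : Λ.hLabel = Λ'.hLabel) : Λ = Λ' := by
  cases Λ; cases Λ'
  simp only at h1 h2
  subst h1; subst h2
  rfl

lemma mult_eq_zero_side (Λ : ConvexGenerator) (d : ℕ × ℕ) (h1 : d ≠ (1, 0))
    (h2 : d ≠ (0, 1)) (h : d.1 = 0 ∨ d.2 = 0) : Λ.mult d = 0 := by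
  by_contra hm
  have hcop := Λ.coprime_of_mem d hm
  rcases h with h | h
  · rw [h] at hcop
    have : d.2 = 1 := (Nat.coprime_zero_left d.2).mp hcop
    exact h2 (Prod.ext h this)
  · rw [h] at hcop
    have : d.1 = 1 := (Nat.coprime_zero_right d.1).mp hcop
    exact h1 (Prod.ext this h)

lemma mult_eq_of_suppFn_eq (Λ Λ' : ConvexGenerator)
    (h : ∀ a' b' : ℕ, Λ.suppFn a' b' = Λ'.suppFn a' b') : Λ.mult = Λ'.mult := by
  classical
  set s := (Λ.finite_support.union Λ'.finite_support).toFinset with hsdef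
  have hsΛ : ∀ d, Λ.mult d ≠ 0 → d ∈ s := by
    intro d hd
    rw [hsdef, Set.Finite.mem_toFinset]
    exact Or.inl hd
  have hsΛ' : ∀ d, Λ'.mult d ≠ 0 → d ∈ s := by
    intro d hd
    rw [hsdef, Set.Finite.mem_toFinset]
    exact Or.inr hd
  set N := (s.sup fun d => d.1) + 1 with hNdef
  have hN : ∀ d ∈ s, d.1 < N := fun d hd =>
    Nat.lt_succ_of_le (Finset.le_sup (f := fun d => d.1) hd)
  have hN1 : 1 ≤ N := Nat.le_add_left 1 _
  -- mixed directions
  have hmix : ∀ d : ℕ × ℕ, d.1 ≠ 0 → d.2 ≠ 0 → Λ.mult d = Λ'.mult d := by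
    intro d h1 h2
    by_cases hz : Λ.mult d = 0 ∧ Λ'.mult d = 0
    · rw [hz.1, hz.2]
    have hcop : Nat.Coprime d.1 d.2 := by
      rcases not_and_or.mp hz with hc | hc
      · exact Λ.coprime_of_mem d hc
      · exact Λ'.coprime_of_mem d hc
    have e1 := stepA Λ hsΛ N d.1 d.2 (Nat.one_le_iff_ne_zero.mpr h1)
      (Nat.one_le_iff_ne_zero.mpr h2) hcop hN hN1
    have e2 := stepA Λ' hsΛ' N d.1 d.2 (Nat.one_le_iff_ne_zero.mpr h1)
      (Nat.one_le_iff_ne_zero.mpr h2) hcop hN hN1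
    rw [h _ _, h _ _, h _ _] at e1
    have key : d.1 * Λ.mult (d.1, d.2) = d.1 * Λ'.mult (d.1, d.2) := by omega
    have := Nat.eq_of_mul_eq_mul_left (Nat.pos_of_ne_zero h1) key
    rwa [Prod.mk.eta] at this
  -- horizontal direction (1,0)
  have hx : Λ.xCoord = Λ'.xCoord := by
    rw [← suppFn_zero_one, ← suppFn_zero_one, h 0 1]
  have hy : Λ.yCoord = Λ'.yCoord := by
    rw [← suppFn_one_zero, ← suppFn_one_zero, h 1 0]
  have hother : ∀ (v : ℕ × ℕ), ∀ d ∈ s.erase v,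
      (∀ e : ℕ × ℕ, e.1 ≠ 0 → e.2 ≠ 0 → True) → True := fun _ _ _ _ => trivial
  have m10 : Λ.mult (1, 0) = Λ'.mult (1, 0) := by
    have hmem : (1, 0) ∈ insert ((1, 0) : ℕ × ℕ) s := Finset.mem_insert_self _ _
    have hsi : ∀ d, Λ.mult d ≠ 0 → d ∈ insert ((1, 0) : ℕ × ℕ) s :=
      fun d hd => Finset.mem_insert_of_mem (hsΛ d hd)
    have hsi' : ∀ d, Λ'.mult d ≠ 0 → d ∈ insert ((1, 0) : ℕ × ℕ) s :=
      fun d hd => Finset.mem_insert_of_mem (hsΛ' d hd)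
    have hsum : ∑ d ∈ insert ((1, 0) : ℕ × ℕ) s, Λ.mult d * d.1
        = ∑ d ∈ insert ((1, 0) : ℕ × ℕ) s, Λ'.mult d * d.1 := by
      rw [← xCoord_eq_sum Λ hsi, ← xCoord_eq_sum Λ' hsi', hx]
    rw [← Finset.add_sum_erase _ _ hmem, ← Finset.add_sum_erase _ _ hmem] at hsum
    have herase : ∑ d ∈ (insert ((1, 0) : ℕ × ℕ) s).erase (1, 0), Λ.mult d * d.1
        = ∑ d ∈ (insert ((1, 0) : ℕ × ℕ) s).erase (1, 0), Λ'.mult d * d.1 := by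
      refine Finset.sum_congr rfl fun d hd => ?_
      have hne : d ≠ (1, 0) := Finset.ne_of_mem_erase hd
      by_cases hd1 : d.1 = 0
      · simp [hd1]
      by_cases hd2 : d.2 = 0
      · have hz1 := mult_eq_zero_side Λ d hne (fun hc => by rw [hc] at hd2; simp at hd2) (Or.inr hd2)
        have hz2 := mult_eq_zero_side Λ' d hne (fun hc => by rw [hc] at hd2; simp at hd2) (Or.inr hd2)
        rw [hz1, hz2]
      · rw [hmix d hd1 hd2]
    omega
  have m01 : Λ.mult (0, 1) = Λ'.mult (0, 1) := by
    have hmem : (0, 1) ∈ insert ((0, 1) : ℕ × ℕ) s := Finset.mem_insert_self _ _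
    have hsi : ∀ d, Λ.mult d ≠ 0 → d ∈ insert ((0, 1) : ℕ × ℕ) s :=
      fun d hd => Finset.mem_insert_of_mem (hsΛ d hd)
    have hsi' : ∀ d, Λ'.mult d ≠ 0 → d ∈ insert ((0, 1) : ℕ × ℕ) s :=
      fun d hd => Finset.mem_insert_of_mem (hsΛ' d hd)
    have hsum : ∑ d ∈ insert ((0, 1) : ℕ × ℕ) s, Λ.mult d * d.2
        = ∑ d ∈ insert ((0, 1) : ℕ × ℕ) s, Λ'.mult d * d.2 := by
      rw [← yCoord_eq_sum Λ hsi, ← yCoord_eq_sum Λ' hsi', hy]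
    rw [← Finset.add_sum_erase _ _ hmem, ← Finset.add_sum_erase _ _ hmem] at hsum
    have herase : ∑ d ∈ (insert ((0, 1) : ℕ × ℕ) s).erase (0, 1), Λ.mult d * d.2
        = ∑ d ∈ (insert ((0, 1) : ℕ × ℕ) s).erase (0, 1), Λ'.mult d * d.2 := by
      refine Finset.sum_congr rfl fun d hd => ?_
      have hne : d ≠ (0, 1) := Finset.ne_of_mem_erase hd
      by_cases hd2 : d.2 = 0
      · simp [hd2]
      by_cases hd1 : d.1 = 0
      · have hz1 := mult_eq_zero_side Λ d (fun hc => by rw [hc] at hd1; simp at hd1) hne (Or.inl hd1)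
        have hz2 := mult_eq_zero_side Λ' d (fun hc => by rw [hc] at hd1; simp at hd1) hne (Or.inl hd1)
        rw [hz1, hz2]
      · rw [hmix d hd1 hd2]
    omega
  funext d
  by_cases hd10 : d = (1, 0)
  · rw [hd10]; exact m10
  by_cases hd01 : d = (0, 1)
  · rw [hd01]; exact m01
  by_cases hd1 : d.1 = 0
  · rw [mult_eq_zero_side Λ d hd10 hd01 (Or.inl hd1),
        mult_eq_zero_side Λ' d hd10 hd01 (Or.inl hd1)]
  by_cases hd2 : d.2 = 0
  · rw [mult_eq_zero_side Λ d hd10 hd01 (Or.inr hd2),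
        mult_eq_zero_side Λ' d hd10 hd01 (Or.inr hd2)]
  · exact hmix d hd1 hd2

end EllMin

open EllMin ConvexGenerator

/-- **Lemma 2.1(a)**: if `Λ` is the maximal convex integral path, with all edges labeled
`e`, tangent to a line of slope `-b/a` through a lattice point `(x,y)` (i.e. the region it
encloses with the axes consists exactly of the lattice points `(x',y')` with
`b x' + a y' ≤ b x + a y`), then `Λ` is minimal for the ellipsoid `E(a,b)`. -/
theorem ellipsoid_minimal (a b : ℝ) (ha : 0 < a) (hb : 0 < b) (x y : ℕ)
    (Λ : ConvexGenerator) (hE : Λ.allE)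
    (hreg : Λ.latticeRegion =
      {p : ℕ × ℕ | b * (p.1 : ℝ) + a * (p.2 : ℝ) ≤ b * (x : ℝ) + a * (y : ℝ)}) :
    IsMinimal (triOmega a b) Λ := by
  classical
  refine ⟨hE, ?_⟩
  intro Λ' hE' hI hne
  by_contra hlt
  push_neg at hlt
  rw [action_eq_rS Λ a b ha hb, action_eq_rS Λ' a b ha hb] at hlt
  set c := b * (x : ℝ) + a * (y : ℝ) with hc
  -- Step 1: rS Λ a b ≤ c
  have hsΛ : ∀ d, Λ.mult d ≠ 0 → d ∈ Λ.finite_support.toFinset :=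
    fun d hd => Λ.finite_support.mem_toFinset.mpr hd
  have hsΛ' : ∀ d, Λ'.mult d ≠ 0 → d ∈ Λ'.finite_support.toFinset :=
    fun d hd => Λ'.finite_support.mem_toFinset.mpr hd
  have hΛle : rS Λ a b ≤ c := by
    set P := fun d : ℕ × ℕ => a * (d.2 : ℝ) < b * d.1 with hP
    have hwit := witness_mem Λ hsΛ P
    set X := ∑ d ∈ Λ.finite_support.toFinset, if P d then Λ.mult d * d.1 else 0 with hX
    set Y := ∑ d ∈ Λ.finite_support.toFinset, if P d then 0 else Λ.mult d * d.2 with hY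
    have hval : rS Λ a b = b * (X : ℝ) + a * (Y : ℝ) := by
      rw [rS_eq_sum Λ a b hsΛ, hX, hY]
      push_cast
      rw [Finset.mul_sum, Finset.mul_sum, ← Finset.sum_add_distrib]
      refine Finset.sum_congr rfl fun d _ => ?_
      by_cases hPd : P d
      · simp only [if_pos hPd]
        rw [max_eq_right (le_of_lt hPd)]
        ring
      · simp only [if_neg hPd]
        rw [max_eq_left (not_lt.mp hPd)]
        ring
    rw [hval]
    rw [hreg] at hwit
    exact hwit
  -- Step 2: region of Λ' is contained in region of Λ
  have hsub : Λ'.latticeRegion ⊆ Λ.latticeRegion := by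
    intro p hp
    have h1 : b * (p.1 : ℝ) + a * p.2 ≤ rS Λ' a b := region_bound Λ' hp ha.le hb.le
    rw [hreg]
    exact le_trans h1 (le_trans hlt hΛle)
  -- Step 3: equal lattice-point counts
  have hc0 : Λ.hCount = 0 := hCount_eq_zero Λ hE
  have hc0' : Λ'.hCount = 0 := hCount_eq_zero Λ' hE'
  have hL : Λ'.LCount = Λ.LCount := by
    unfold ConvexGenerator.iIndex at hI
    rw [hc0, hc0'] at hI
    push_cast at hI
    omega
  -- Step 4: the regions are equal
  have hregeq : Λ'.latticeRegion = Λ.latticeRegion :=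
    Set.eq_of_subset_of_ncard_le hsub (le_of_eq hL.symm) (region_finite Λ)
  -- Step 5: equal support functions, hence equal generators
  have hsupp : ∀ a' b' : ℕ, Λ'.suppFn a' b' = Λ.suppFn a' b' := by
    intro a' b'
    apply le_antisymm
    · obtain ⟨p, hpmem, hpval⟩ := suppFn_attained Λ' a' b' hsΛ'
      rw [← hpval]
      exact (hregeq ▸ hpmem) a' b'
    · obtain ⟨p, hpmem, hpval⟩ := suppFn_attained Λ a' b' hsΛ
      rw [← hpval]
      exact (hregeq.symm ▸ hpmem) a' b'
  have hmult := mult_eq_of_suppFn_eq Λ' Λ hsupp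
  exact hne (gen_ext Λ' Λ hmult (funext fun d => by rw [hE' d, hE d]))
end

section
/- Fix a, b > 0 and let x, y be nonnegative integers. Suppose that bx' + ay' > bx + ay whenever (x',y') is a pair of nonnegative integers different from (x,y) with (x'+1)(y'+1) ≥ (x+1)(y+1). Then the convex generator Λ = e_{1,0}^x e_{0,1}^y (a horizontal edge of multiplicity x and a vertical edge of multiplicity y, both labeled 'e') is minimal for the polydisk P(a,b). -/
open Real Set

section Aux

open ConvexGenerator

/-- Extensionality for convex generators. -/
lemma ConvexGenerator.ext' {Λ₁ Λ₂ : ConvexGenerator}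
    (h1 : Λ₁.mult = Λ₂.mult) (h2 : Λ₁.hLabel = Λ₂.hLabel) : Λ₁ = Λ₂ := by
  cases Λ₁; cases Λ₂
  dsimp at h1 h2
  subst h1; subst h2
  rfl

lemma finsum_mult_nat (Λ : ConvexGenerator) (g : ℕ × ℕ → ℕ) :
    ∑ᶠ d, Λ.mult d * g d = ∑ d ∈ Λ.finite_support.toFinset, Λ.mult d * g d := by
  apply finsum_eq_finset_sum_of_support_subset
  intro d hd
  simp only [Function.mem_support] at hd
  simp only [Finset.coe_sort_coe, Set.Finite.coe_toFinset, Set.mem_setOf_eq]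
  intro h
  exact hd (by simp [h])

lemma finsum_mult_real (Λ : ConvexGenerator) (g : ℕ × ℕ → ℝ) :
    ∑ᶠ d, (Λ.mult d : ℝ) * g d = ∑ d ∈ Λ.finite_support.toFinset, (Λ.mult d : ℝ) * g d := by
  apply finsum_eq_finset_sum_of_support_subset
  intro d hd
  simp only [Function.mem_support] at hd
  simp only [Finset.coe_sort_coe, Set.Finite.coe_toFinset, Set.mem_setOf_eq]
  intro h
  exact hd (by simp [h])

lemma xCoord_eq (Λ : ConvexGenerator) :
    Λ.xCoord = ∑ d ∈ Λ.finite_support.toFinset, Λ.mult d * d.1 :=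
  finsum_mult_nat Λ _

lemma yCoord_eq (Λ : ConvexGenerator) :
    Λ.yCoord = ∑ d ∈ Λ.finite_support.toFinset, Λ.mult d * d.2 :=
  finsum_mult_nat Λ _

lemma suppFn_eq (Λ : ConvexGenerator) (a' b' : ℕ) :
    Λ.suppFn a' b' = a' * Λ.yCoord +
      ∑ d ∈ Λ.finite_support.toFinset, Λ.mult d * (b' * d.1 - a' * d.2) := by
  rw [ConvexGenerator.suppFn, finsum_mult_nat]

/-- The action of any generator with respect to the rectangle. -/
lemma action_rect (Λ : ConvexGenerator) {a b : ℝ} (ha : 0 ≤ a) (hb : 0 ≤ b) :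
    Λ.action (rectOmega a b) = b * Λ.xCoord + a * Λ.yCoord := by
  have hsup : ∀ d : ℕ × ℕ,
      sSup ((fun p : ℝ × ℝ => (d.2 : ℝ) * p.1 + (d.1 : ℝ) * p.2) '' rectOmega a b)
        = (d.2 : ℝ) * a + (d.1 : ℝ) * b := by
    intro d
    apply IsGreatest.csSup_eq
    constructor
    · exact ⟨(a, b), ⟨ha, le_refl a, hb, le_refl b⟩, rfl⟩
    · rintro q ⟨p, ⟨hp1, hp2, hp3, hp4⟩, rfl⟩
      have h1 : (d.2 : ℝ) * p.1 ≤ (d.2 : ℝ) * a :=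
        mul_le_mul_of_nonneg_left hp2 (by positivity)
      have h2 : (d.1 : ℝ) * p.2 ≤ (d.1 : ℝ) * b :=
        mul_le_mul_of_nonneg_left hp4 (by positivity)
      exact add_le_add h1 h2
  rw [ConvexGenerator.action]
  simp_rw [hsup]
  rw [finsum_mult_real]
  have hx : (Λ.xCoord : ℝ) = ∑ d ∈ Λ.finite_support.toFinset, ((Λ.mult d : ℝ) * d.1) := by
    rw [xCoord_eq]; push_cast; rfl
  have hy : (Λ.yCoord : ℝ) = ∑ d ∈ Λ.finite_support.toFinset, ((Λ.mult d : ℝ) * d.2) := by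
    rw [yCoord_eq]; push_cast; rfl
  rw [hx, hy, Finset.mul_sum, Finset.mul_sum, ← Finset.sum_add_distrib]
  apply Finset.sum_congr rfl
  intro d _
  ring

/-- The lattice region of any generator lies in the rectangle `[0, x(Λ)] × [0, y(Λ)]`. -/
lemma latticeRegion_subset (Λ : ConvexGenerator) :
    Λ.latticeRegion ⊆ {p : ℕ × ℕ | p.1 ≤ Λ.xCoord ∧ p.2 ≤ Λ.yCoord} := by
  intro p hp
  have h01 := hp 0 1
  have h10 := hp 1 0
  have e01' : Λ.suppFn 0 1 = Λ.xCoord := by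
    rw [suppFn_eq, xCoord_eq]; simp
  have e10' : Λ.suppFn 1 0 = Λ.yCoord := by
    rw [suppFn_eq]; simp
  rw [e01'] at h01
  rw [e10'] at h10
  constructor
  · simpa using h01
  · simpa using h10

lemma rect_eq_coe (x y : ℕ) :
    {p : ℕ × ℕ | p.1 ≤ x ∧ p.2 ≤ y} = ↑(Finset.Iic x ×ˢ Finset.Iic y) := by
  ext p
  simp [Finset.mem_product, Prod.le_def]

lemma rect_finite (x y : ℕ) : ({p : ℕ × ℕ | p.1 ≤ x ∧ p.2 ≤ y}).Finite := by
  rw [rect_eq_coe]; exact (Finset.Iic x ×ˢ Finset.Iic y).finite_toSet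

lemma rect_ncard (x y : ℕ) :
    ({p : ℕ × ℕ | p.1 ≤ x ∧ p.2 ≤ y}).ncard = (x + 1) * (y + 1) := by
  rw [rect_eq_coe, Set.ncard_coe_finset, Finset.card_product, Nat.card_Iic, Nat.card_Iic]

lemma hCount_eq_zero {Λ : ConvexGenerator} (h : Λ.allE) : Λ.hCount = 0 := by
  have : {d : ℕ × ℕ | Λ.hLabel d = true} = ∅ := by
    ext d; simp [h d]
  rw [ConvexGenerator.hCount, this, Set.ncard_empty]

lemma mulCG_mult (x y : ℕ) (d : ℕ × ℕ) :
    (mulCG (e10 x) (e01 y)).mult d =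
      (if d = (1, 0) then x else 0) + (if d = (0, 1) then y else 0) := rfl

lemma pair_sum (f : ℕ × ℕ → ℕ) (hf : ∀ d, f d ≠ 0 → d = (1, 0) ∨ d = (0, 1)) :
    ∑ᶠ d, f d = f (1, 0) + f (0, 1) := by
  have : ∑ᶠ d, f d = ∑ d ∈ ({(1, 0), (0, 1)} : Finset (ℕ × ℕ)), f d := by
    apply finsum_eq_finset_sum_of_support_subset
    intro d hd
    simp only [Function.mem_support] at hd
    rcases hf d hd with h | h <;> simp [h]
  rw [this, Finset.sum_insert (by decide), Finset.sum_singleton]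

lemma mulCG_xCoord (x y : ℕ) : (mulCG (e10 x) (e01 y)).xCoord = x := by
  rw [ConvexGenerator.xCoord, pair_sum _ (fun d hd => ?_)]
  · simp [mulCG_mult]
  · by_contra hc
    push_neg at hc
    rw [mulCG_mult] at hd
    simp [hc.1, hc.2] at hd

lemma mulCG_yCoord (x y : ℕ) : (mulCG (e10 x) (e01 y)).yCoord = y := by
  rw [ConvexGenerator.yCoord, pair_sum _ (fun d hd => ?_)]
  · simp [mulCG_mult]
  · by_contra hc
    push_neg at hc
    rw [mulCG_mult] at hd
    simp [hc.1, hc.2] at hd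

lemma mulCG_suppFn (x y a' b' : ℕ) :
    (mulCG (e10 x) (e01 y)).suppFn a' b' = a' * y + b' * x := by
  rw [ConvexGenerator.suppFn, mulCG_yCoord, pair_sum _ (fun d hd => ?_)]
  · simp [mulCG_mult, Nat.mul_comm]
  · by_contra hc
    push_neg at hc
    rw [mulCG_mult] at hd
    simp [hc.1, hc.2] at hd

lemma mulCG_region (x y : ℕ) :
    (mulCG (e10 x) (e01 y)).latticeRegion = {p : ℕ × ℕ | p.1 ≤ x ∧ p.2 ≤ y} := by
  apply Set.Subset.antisymm
  · have := latticeRegion_subset (mulCG (e10 x) (e01 y))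
    rwa [mulCG_xCoord, mulCG_yCoord] at this
  · rintro p ⟨hp1, hp2⟩ a' b'
    rw [mulCG_suppFn]
    have := Nat.add_le_add (Nat.mul_le_mul_left b' hp1) (Nat.mul_le_mul_left a' hp2)
    omega

lemma mulCG_LCount (x y : ℕ) :
    (mulCG (e10 x) (e01 y)).LCount = (x + 1) * (y + 1) := by
  rw [ConvexGenerator.LCount, mulCG_region, rect_ncard]

end Aux

/-- **Lemma 2.1(b)**: if `(x,y)` strictly minimizes `b x' + a y'` among pairs of
nonnegative integers with `(x'+1)(y'+1) ≥ (x+1)(y+1)`, then `e_{1,0}^x e_{0,1}^y` is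
minimal for the polydisk `P(a,b)`. -/
theorem polydisk_minimal (a b : ℝ) (ha : 0 < a) (hb : 0 < b) (x y : ℕ)
    (hstrict : ∀ x' y' : ℕ, (x', y') ≠ (x, y) → (x + 1) * (y + 1) ≤ (x' + 1) * (y' + 1) →
      b * (x : ℝ) + a * (y : ℝ) < b * (x' : ℝ) + a * (y' : ℝ)) :
    IsMinimal (rectOmega a b) (mulCG (e10 x) (e01 y)) := by
  constructor
  · intro d; rfl
  · intro Λ' hE' hI hne
    set x' := Λ'.xCoord with hx'def
    set y' := Λ'.yCoord with hy'def
    -- equal L counts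
    have hI' : Λ'.LCount = (x + 1) * (y + 1) := by
      rw [ConvexGenerator.iIndex, ConvexGenerator.iIndex, hCount_eq_zero hE',
        hCount_eq_zero (fun d => rfl), mulCG_LCount] at hI
      omega
    -- L(Λ') ≤ (x'+1)(y'+1)
    have hsub : Λ'.latticeRegion ⊆ {p : ℕ × ℕ | p.1 ≤ x' ∧ p.2 ≤ y'} :=
      latticeRegion_subset Λ'
    have hle : (x + 1) * (y + 1) ≤ (x' + 1) * (y' + 1) := by
      rw [← hI', ← rect_ncard x' y']
      exact Set.ncard_le_ncard hsub (rect_finite x' y')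
    by_cases hxy : (x', y') = (x, y)
    · -- rigidity: Λ' must equal Λ, contradiction
      exfalso
      have hxx : x' = x := congrArg Prod.fst hxy
      have hyy : y' = y := congrArg Prod.snd hxy
      have hregion : Λ'.latticeRegion = {p : ℕ × ℕ | p.1 ≤ x' ∧ p.2 ≤ y'} := by
        apply Set.eq_of_subset_of_ncard_le hsub _ (rect_finite x' y')
        rw [rect_ncard]
        have hrfl : Λ'.latticeRegion.ncard = Λ'.LCount := rfl
        rw [hrfl, hI', hxx, hyy]
      have hmem : (x', y') ∈ Λ'.latticeRegion := by
        rw [hregion]; exact ⟨le_refl _, le_refl _⟩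
      have hkey := hmem 1 1
      rw [suppFn_eq] at hkey
      simp only [one_mul] at hkey
      -- x' ≤ ∑ mult d * (d.1 - d.2)
      have hkey2 : x' ≤ ∑ d ∈ Λ'.finite_support.toFinset, Λ'.mult d * (d.1 - d.2) := by
        omega
      have hterm : ∀ d ∈ Λ'.finite_support.toFinset,
          Λ'.mult d * (d.1 - d.2) ≤ Λ'.mult d * d.1 :=
        fun d _ => Nat.mul_le_mul_left _ (Nat.sub_le _ _)
      have hsumle : ∑ d ∈ Λ'.finite_support.toFinset, Λ'.mult d * (d.1 - d.2) ≤ x' := by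
        rw [hx'def, xCoord_eq]
        exact Finset.sum_le_sum hterm
      have hsumeq : ∑ d ∈ Λ'.finite_support.toFinset, Λ'.mult d * (d.1 - d.2)
          = ∑ d ∈ Λ'.finite_support.toFinset, Λ'.mult d * d.1 := by
        rw [← xCoord_eq, ← hx'def]
        omega
      have htermeq := (Finset.sum_eq_sum_iff_of_le hterm).mp hsumeq
      -- each direction in the support is (1,0) or (0,1)
      have hdir : ∀ d : ℕ × ℕ, Λ'.mult d ≠ 0 → d = (1, 0) ∨ d = (0, 1) := by
        intro d hd
        have hdS : d ∈ Λ'.finite_support.toFinset := by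
          simp only [Set.Finite.mem_toFinset, Set.mem_setOf_eq]; exact hd
        have heq := htermeq d hdS
        have h12 : d.1 - d.2 = d.1 := Nat.eq_of_mul_eq_mul_left (Nat.pos_of_ne_zero hd) heq
        have hcop := Λ'.coprime_of_mem d hd
        rcases Nat.eq_zero_or_pos d.1 with h1 | h1
        · right
          have : d.2 = 1 := by
            have := (Nat.coprime_zero_left d.2).mp (h1 ▸ hcop)
            exact this
          exact Prod.ext h1 this
        · left
          have h2 : d.2 = 0 := by omega
          have : d.1 = 1 := (Nat.coprime_zero_right d.1).mp (h2 ▸ hcop)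
          exact Prod.ext this h2
      -- compute multiplicities
      have hm10 : Λ'.mult (1, 0) = x' := by
        rw [hx'def, ConvexGenerator.xCoord, pair_sum _ (fun d hd => ?_)]
        · simp
        · have : Λ'.mult d ≠ 0 := by
            intro h; rw [h] at hd; simp at hd
          exact hdir d this
      have hm01 : Λ'.mult (0, 1) = y' := by
        rw [hy'def, ConvexGenerator.yCoord, pair_sum _ (fun d hd => ?_)]
        · simp
        · have : Λ'.mult d ≠ 0 := by
            intro h; rw [h] at hd; simp at hd
          exact hdir d this
      apply hne
      apply ConvexGenerator.ext'
      · funext d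
        rw [mulCG_mult]
        by_cases h10 : d = (1, 0)
        · subst h10; simp [hm10, hxx]
        · by_cases h01 : d = (0, 1)
          · subst h01; simp [hm01, hyy]
          · simp only [h10, h01, if_false, add_zero]
            by_contra h
            rcases hdir d h with h' | h' <;> simp [h'] at h10 h01
      · funext d
        rw [hE' d]; rfl
    · -- strict minimality
      rw [action_rect _ ha.le hb.le, action_rect _ ha.le hb.le,
        mulCG_xCoord, mulCG_yCoord]
      exact hstrict x' y' hxy hle
end

section
/- Let a ≥ 1, let b be a positive integer, and let c > 0 with a + b > bc. If Λ is a convex generator with Λ ≤_{P(a,1),E(bc,c)} e_{b,1}, where e_{b,1} is the convex generator consisting of a single edge from (0,1) to (b,0) labeled 'e', then Λ = e_{1,0}^{b+1} (a single horizontal edge of multiplicity b+1 labeled 'e'). -/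
open Real Set

namespace StepOne

open ConvexGenerator

lemma eGen_xCoord (a b : ℕ) (hab : Nat.Coprime a b) (m : ℕ) :
    (eGen a b hab m).xCoord = m * a := by
  unfold ConvexGenerator.xCoord
  rw [finsum_eq_single _ ((a, b) : ℕ × ℕ)] <;> simp +contextual [eGen]

lemma eGen_yCoord (a b : ℕ) (hab : Nat.Coprime a b) (m : ℕ) :
    (eGen a b hab m).yCoord = m * b := by
  unfold ConvexGenerator.yCoord
  rw [finsum_eq_single _ ((a, b) : ℕ × ℕ)] <;> simp +contextual [eGen]

lemma eGen_mTotal (a b : ℕ) (hab : Nat.Coprime a b) (m : ℕ) :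
    (eGen a b hab m).mTotal = m := by
  unfold ConvexGenerator.mTotal
  rw [finsum_eq_single _ ((a, b) : ℕ × ℕ)] <;> simp +contextual [eGen]

lemma eGen_hCount (a b : ℕ) (hab : Nat.Coprime a b) (m : ℕ) :
    (eGen a b hab m).hCount = 0 := by
  unfold ConvexGenerator.hCount
  simp [eGen]

lemma eGen_suppFn (a b : ℕ) (hab : Nat.Coprime a b) (m a' b' : ℕ) :
    (eGen a b hab m).suppFn a' b' = a' * (m * b) + m * (b' * a - a' * b) := by
  unfold ConvexGenerator.suppFn
  rw [eGen_yCoord]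
  congr 1
  rw [finsum_eq_single _ ((a, b) : ℕ × ℕ)] <;> simp +contextual [eGen]

lemma latticeRegion_e10 (m : ℕ) :
    (e10 m).latticeRegion = (fun n => (n, 0)) '' Set.Iic m := by
  ext ⟨p, q⟩
  simp only [ConvexGenerator.latticeRegion, Set.mem_setOf_eq, Set.mem_image, Set.mem_Iic]
  constructor
  · intro h
    have h1 := h 1 0
    have h2 := h 0 1
    rw [e10, eGen_suppFn] at h1 h2
    simp at h1 h2
    exact ⟨p, by omega, by simp; omega⟩
  · rintro ⟨n, hn, hnp⟩ a' b'
    injection hnp with h1 h2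
    subst h1; subst h2
    rw [e10, eGen_suppFn]
    have hbp : b' * n ≤ b' * m := Nat.mul_le_mul_left _ hn
    have hcomm : m * b' = b' * m := Nat.mul_comm _ _
    simp only [Nat.mul_zero, Nat.mul_one, Nat.sub_zero, Nat.zero_add]
    omega

lemma LCount_e10 (m : ℕ) : (e10 m).LCount = m + 1 := by
  rw [ConvexGenerator.LCount, latticeRegion_e10,
    Set.ncard_image_of_injective _ (fun x y h => by simpa [Prod.ext_iff] using h)]
  simp [Set.ncard_eq_toFinset_card']

lemma iIndex_e10 (m : ℕ) : (e10 m).iIndex = 2 * m := by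
  rw [ConvexGenerator.iIndex, LCount_e10, e10, eGen_hCount]
  push_cast; ring

lemma latticeRegion_eb1 (b : ℕ) :
    (eb1 b 1).latticeRegion = ((fun n => (n, 0)) '' Set.Iic b) ∪ {((0 : ℕ), (1 : ℕ))} := by
  ext ⟨p, q⟩
  simp only [ConvexGenerator.latticeRegion, Set.mem_setOf_eq, Set.mem_union, Set.mem_image,
    Set.mem_Iic, Set.mem_singleton_iff, Prod.mk.injEq]
  constructor
  · intro h
    have h1 := h 1 0
    have h2 := h 0 1
    have h3 := h b 1
    rw [eb1, eGen_suppFn] at h1 h2 h3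
    simp only [Nat.one_mul, Nat.mul_one, Nat.mul_zero, Nat.zero_mul, Nat.zero_add,
      Nat.add_zero, Nat.sub_self, Nat.sub_zero] at h1 h2 h3
    rcases Nat.lt_or_ge q 1 with hq | hq
    · exact Or.inl ⟨p, by omega, rfl, by omega⟩
    · have hb1 : b * 1 ≤ b * q := Nat.mul_le_mul_left _ hq
      exact Or.inr ⟨by omega, by omega⟩
  · intro hyp a' b'
    rw [eb1, eGen_suppFn]
    simp only [Nat.mul_one, Nat.one_mul]
    rcases hyp with ⟨n, hn, hnp, hnq⟩ | ⟨hp, hq⟩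
    · subst hnp; subst hnq
      have hbp : b' * n ≤ b' * b := Nat.mul_le_mul_left _ hn
      omega
    · subst hp; subst hq
      omega

lemma LCount_eb1 (b : ℕ) : (eb1 b 1).LCount = b + 2 := by
  rw [ConvexGenerator.LCount, latticeRegion_eb1]
  rw [Set.ncard_union_eq]
  · rw [Set.ncard_image_of_injective _ (fun x y h => by simpa [Prod.ext_iff] using h)]
    simp [Set.ncard_eq_toFinset_card']
  · simp [Set.disjoint_left]

lemma iIndex_eb1 (b : ℕ) : (eb1 b 1).iIndex = 2 * (b + 1) := by
  rw [ConvexGenerator.iIndex, LCount_eb1, eb1, eGen_hCount]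
  push_cast; ring

end StepOne

namespace StepOne

lemma action_eb1 (b : ℕ) (c : ℝ) (hb : 0 < b) (hc : 0 < c) :
    (eb1 b 1).action (triOmega ((b : ℝ) * c) c) = (b : ℝ) * c := by
  unfold ConvexGenerator.action
  rw [finsum_eq_single _ ((b, 1) : ℕ × ℕ)]
  · have hbc : (0 : ℝ) < (b : ℝ) * c := by positivity
    have hgreat : IsGreatest
        ((fun p : ℝ × ℝ => ((1 : ℕ) : ℝ) * p.1 + ((b : ℕ) : ℝ) * p.2) '' triOmega ((b : ℝ) * c) c)
        ((b : ℝ) * c) := by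
      constructor
      · exact ⟨((b : ℝ) * c, 0), ⟨le_of_lt hbc, le_refl 0, by
          rw [div_self (ne_of_gt hbc)]; simp⟩, by simp⟩
      · rintro x ⟨p, ⟨hp1, hp2, hp3⟩, rfl⟩
        have h4 : (p.1 / ((b : ℝ) * c) + p.2 / c) * ((b : ℝ) * c) ≤ 1 * ((b : ℝ) * c) :=
          mul_le_mul_of_nonneg_right hp3 (le_of_lt hbc)
        have e1 : p.1 / ((b : ℝ) * c) * ((b : ℝ) * c) = p.1 :=
          div_mul_cancel₀ _ (ne_of_gt hbc)
        have e2 : p.2 / c * c = p.2 := div_mul_cancel₀ _ (ne_of_gt hc)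
        rw [add_mul, e1] at h4
        have h5 : p.2 / c * ((b : ℝ) * c) = (b : ℝ) * p.2 := by
          rw [mul_comm (b : ℝ) c, ← mul_assoc, e2]; ring
        push_cast
        linarith
    rw [hgreat.csSup_eq]
    simp [eb1, eGen]
  · intro x hx
    simp [eb1, eGen, hx]

lemma action_rect (a : ℝ) (ha : 1 ≤ a) (Λ : ConvexGenerator) :
    Λ.action (rectOmega a 1) = a * (Λ.yCoord : ℝ) + (Λ.xCoord : ℝ) := by
  classical
  have ha0 : (0 : ℝ) ≤ a := le_trans zero_le_one ha
  have hsup : ∀ d : ℕ × ℕ,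
      sSup ((fun p : ℝ × ℝ => (d.2 : ℝ) * p.1 + (d.1 : ℝ) * p.2) '' rectOmega a 1)
        = (d.2 : ℝ) * a + (d.1 : ℝ) := by
    intro d
    have hgreat : IsGreatest
        ((fun p : ℝ × ℝ => (d.2 : ℝ) * p.1 + (d.1 : ℝ) * p.2) '' rectOmega a 1)
        ((d.2 : ℝ) * a + (d.1 : ℝ)) := by
      constructor
      · exact ⟨(a, 1), ⟨ha0, le_refl a, zero_le_one, le_refl 1⟩, by simp⟩
      · rintro x ⟨p, ⟨hp1, hp2, hp3, hp4⟩, rfl⟩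
        have t1 : (d.2 : ℝ) * p.1 ≤ (d.2 : ℝ) * a :=
          mul_le_mul_of_nonneg_left hp2 (Nat.cast_nonneg _)
        have t2 : (d.1 : ℝ) * p.2 ≤ (d.1 : ℝ) * 1 :=
          mul_le_mul_of_nonneg_left hp4 (Nat.cast_nonneg _)
        simp only []
        linarith
    exact hgreat.csSup_eq
  unfold ConvexGenerator.action
  have hsub : ∀ g : ℕ × ℕ → ℝ,
      (Function.support fun d => (Λ.mult d : ℝ) * g d) ⊆ ↑Λ.finite_support.toFinset := by
    intro g d hd
    simp only [Set.Finite.coe_toFinset, Set.mem_setOf_eq]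
    intro h0
    apply hd
    simp [Function.mem_support, h0]
  have hsubn : ∀ g : ℕ × ℕ → ℕ,
      (Function.support fun d => Λ.mult d * g d) ⊆ ↑Λ.finite_support.toFinset := by
    intro g d hd
    simp only [Set.Finite.coe_toFinset, Set.mem_setOf_eq]
    intro h0
    apply hd
    simp [Function.mem_support, h0]
  rw [finsum_eq_finset_sum_of_support_subset _ (hsub _)]
  unfold ConvexGenerator.xCoord ConvexGenerator.yCoord
  rw [finsum_eq_finset_sum_of_support_subset _ (hsubn fun d => d.1),
    finsum_eq_finset_sum_of_support_subset _ (hsubn fun d => d.2)]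
  push_cast
  rw [Finset.mul_sum, ← Finset.sum_add_distrib]
  apply Finset.sum_congr rfl
  intro d _
  rw [hsup d]
  ring

end StepOne

namespace StepOne

lemma cg_ext {Λ₁ Λ₂ : ConvexGenerator} (h1 : Λ₁.mult = Λ₂.mult)
    (h2 : Λ₁.hLabel = Λ₂.hLabel) : Λ₁ = Λ₂ := by
  cases Λ₁; cases Λ₂
  simp only [ConvexGenerator.mk.injEq]
  exact ⟨h1, h2⟩

lemma mult_eq_zero_of_yCoord_eq_zero (Λ : ConvexGenerator) (hy : Λ.yCoord = 0)
    (d : ℕ × ℕ) (hd2 : d.2 ≠ 0) : Λ.mult d = 0 := by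
  classical
  by_cases hmem : Λ.mult d = 0
  · exact hmem
  have hsubn : (Function.support fun d => Λ.mult d * d.2) ⊆ ↑Λ.finite_support.toFinset := by
    intro e he
    simp only [Set.Finite.coe_toFinset, Set.mem_setOf_eq]
    intro h0
    apply he
    simp [Function.mem_support, h0]
  rw [ConvexGenerator.yCoord, finsum_eq_finset_sum_of_support_subset _ hsubn] at hy
  have hdmem : d ∈ Λ.finite_support.toFinset := by
    simp only [Set.Finite.mem_toFinset, Set.mem_setOf_eq]; exact hmem
  have := (Finset.sum_eq_zero_iff.mp hy) d hdmem
  exact absurd (mul_eq_zero.mp this).resolve_right (by simp [hmem, hd2])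

end StepOne

/-- **Step 1 of the proof of Theorem 1.6**: if `a ≥ 1`, `b` is a positive integer,
`a + b > bc`, and `Λ ≤_{P(a,1),E(bc,c)} e_{b,1}`, then `Λ = e_{1,0}^{b+1}`. -/
theorem ellipsoid_step1 (a c : ℝ) (b : ℕ) (ha : 1 ≤ a) (hb : 0 < b) (hc : 0 < c)
    (hab : (b : ℝ) * c < a + (b : ℝ))
    (Λ : ConvexGenerator)
    (hle : genLE (rectOmega a 1) (triOmega ((b : ℝ) * c) c) Λ (eb1 b 1)) :
    Λ = e10 (b + 1) := by
  open StepOne in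
  obtain ⟨hI, hA, hxy⟩ := hle
  rw [action_rect a ha Λ, action_eb1 b c hb hc] at hA
  have hx' : (eb1 b 1).xCoord = b := by rw [eb1, eGen_xCoord]; ring
  have hy' : (eb1 b 1).yCoord = 1 := by rw [eb1, eGen_yCoord]
  have hm' : (eb1 b 1).mTotal = 1 := by rw [eb1, eGen_mTotal]
  rw [hx', hy', hm'] at hxy
  have hhc : (0 : ℝ) ≤ (Λ.hCount : ℝ) := Nat.cast_nonneg _
  have hsum : (b : ℝ) + 1 ≤ (Λ.xCoord : ℝ) + (Λ.yCoord : ℝ) := by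
    push_cast at hxy ⊢; linarith
  -- y(Λ) = 0
  have hy0 : Λ.yCoord = 0 := by
    by_contra hy0
    have hy1 : (1 : ℝ) ≤ (Λ.yCoord : ℝ) := by
      exact_mod_cast Nat.one_le_iff_ne_zero.mpr hy0
    nlinarith [mul_nonneg (sub_nonneg.mpr ha) (sub_nonneg.mpr hy1)]
  -- all multiplicity concentrated at (1,0)
  have hsingle : ∀ d : ℕ × ℕ, d ≠ (1, 0) → Λ.mult d = 0 := by
    intro d hd
    by_cases hd2 : d.2 = 0
    · by_contra hm
      have hcop := Λ.coprime_of_mem d hm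
      rw [hd2, Nat.coprime_zero_right] at hcop
      exact hd (Prod.ext hcop hd2)
    · exact mult_eq_zero_of_yCoord_eq_zero Λ hy0 d hd2
  have hxm : Λ.xCoord = Λ.mult (1, 0) := by
    rw [ConvexGenerator.xCoord, finsum_eq_single _ ((1, 0) : ℕ × ℕ)]
    · ring
    · intro x hx; rw [hsingle x hx]; ring
  have hlab : ∀ d : ℕ × ℕ, Λ.hLabel d = false := by
    intro d
    by_cases hd : d = (1, 0)
    · rw [hd]; exact Λ.h_ne_horiz
    · by_contra hcon
      rw [Bool.not_eq_false] at hcon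
      exact Λ.mult_pos_of_h d hcon (hsingle d hd)
  have hΛ : Λ = e10 (Λ.mult (1, 0)) := by
    apply cg_ext
    · funext d
      show Λ.mult d = if d = (1, 0) then Λ.mult (1, 0) else 0
      by_cases hd : d = (1, 0)
      · rw [hd, if_pos rfl]
      · rw [if_neg hd, hsingle d hd]
    · funext d
      exact hlab d
  rw [hΛ] at hI ⊢
  rw [iIndex_e10, iIndex_eb1] at hI
  have : Λ.mult (1, 0) = b + 1 := by exact_mod_cast by omega
  rw [this]
end
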